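/- Let z > 0 be real, N ≥ 0 an integer, and ε a complex number with ε + j ≠ 0 for every integer j ≥ 1; set ν = N + ε. Then ∂/∂ν J_ν(z) = (log(z/2) − ψ(1+ε))·J_ν(z) + [(z/2)^ν/Γ(1+ε)] · ∑_{m=0}^∞ [(−z²/4)^m/m!] · ∑_{j=1}^{m+N} [(−1)^j/((j−1)!·(m+N−j)!)] · 1/(ε+j)², where the inner sum is empty (equal to 0) when m+N = 0. -/

import Mathlib

open scoped BigOperators

/-- The reciprocal of the complex Gamma function, an entire function
(Mathlib's `Complex.Gamma` vanishes at nonpositive integers, so the inverse is `0` there). -/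
noncomputable def Grec (t : ℂ) : ℂ := (Complex.Gamma t)⁻¹

/-- `G k t` is the `k`-th derivative of the reciprocal Gamma function at `t`. -/
noncomputable def G (k : ℕ) (t : ℂ) : ℂ := iteratedDeriv k Grec t

/-- The Maclaurin coefficients of `1/Γ`: `c j = G^{(j)}(0)/j!`. -/
noncomputable def mcCoeff (j : ℕ) : ℂ := iteratedDeriv j Grec 0 / (j.factorial : ℂ)

/-- Bessel function of the first kind `J_ν(z)` for real `z > 0` and complex order `ν`,
with `(z/2)^ν = exp (ν log (z/2))`. -/
noncomputable def besselJ (z : ℝ) (ν : ℂ) : ℂ :=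
  Complex.exp (ν * Complex.log ((z : ℂ) / 2)) *
    ∑' m : ℕ, (-(z : ℂ) ^ 2 / 4) ^ m / ((m.factorial : ℂ) * Complex.Gamma (ν + 1 + m))

/-- Pochhammer symbol `(t)_m = t (t+1) ⋯ (t+m-1)`. -/
noncomputable def poch (t : ℂ) (m : ℕ) : ℂ := ∏ i ∈ Finset.range m, (t + i)

/-- `P m k t = (1/k!) dᵏ/dtᵏ (t)_m`. -/
noncomputable def P (m k : ℕ) (t : ℂ) : ℂ :=
  ((k.factorial : ℂ))⁻¹ * iteratedDeriv k (fun s => poch s m) t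

/-- `Q m k t = (1/k!) dᵏ/dtᵏ (1/(t)_m)`. -/
noncomputable def Q (m k : ℕ) (t : ℂ) : ℂ :=
  ((k.factorial : ℂ))⁻¹ * iteratedDeriv k (fun s => (poch s m)⁻¹) t

/-- Signed Stirling numbers of the first kind: `s(n,k)` is the coefficient of `x^k`
in `x(x-1)⋯(x-n+1)`. -/
noncomputable def stirS (n k : ℕ) : ℤ := (descPochhammer ℤ n).coeff k

/-- Modified generalized harmonic numbers `Ĥ_m^{(k)}`. -/
noncomputable def Hhat (m k : ℕ) : ℝ :=
  if m = 0 then (if k = 0 then 1 else 0)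
  else ∑ j ∈ Finset.Icc 1 m, (-1 : ℝ) ^ (j - 1) * (m.choose j) / (j : ℝ) ^ k

/-- Digamma function `ψ = Γ'/Γ`. -/
noncomputable def digamma (t : ℂ) : ℂ := deriv Complex.Gamma t / Complex.Gamma t

/-! The series `J_ν(z) = (z/2)^ν ∑ₘ (−z²/4)ᵐ/m! · Γ⁻¹(ν+1+m)` converges locally uniformly in `ν`,
because `‖Γ⁻¹(s+1)‖ ≤ ‖Γ⁻¹(s)‖` as soon as `‖s‖ ≥ 1`; hence it can be differentiated termwise.
For `M = m + N` the recurrence of `Γ` gives `Γ⁻¹(1+ε+M) = Γ⁻¹(1+ε) ∏_{j=1}^M (ε+j)⁻¹`, and the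
product splits into partial fractions `∑_j w_j/(ε+j)` whose coefficients are the Lagrange nodal
weights of the nodes `−1, …, −M`, namely `w_j = (−1)^{j−1}/((j−1)!(M−j)!)`. Differentiating
`Γ⁻¹(1+ε) · ∑_j w_j/(ε+j)` with `(Γ⁻¹)' = −ψ Γ⁻¹` gives the two terms of the formula. -/

open Finset Nat Filter Topology

theorem inv_prod_sub_eq_sum_nodalWeight {F ι : Type*} [Field F] [DecidableEq ι] {s : Finset ι}
    {v : ι → F} (hvs : Set.InjOn v s) (hs : s.Nonempty) {x : F} (hx : ∀ i ∈ s, x ≠ v i) :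
    (∏ i ∈ s, (x - v i))⁻¹ = ∑ i ∈ s, Lagrange.nodalWeight s v i * (x - v i)⁻¹ := by
  have h := Lagrange.eval_interpolate_not_at_node 1 hx
  rw [Lagrange.interpolate_one hvs hs, Polynomial.eval_one, Lagrange.eval_nodal] at h
  simp only [Pi.one_apply, mul_one] at h
  exact inv_eq_of_mul_eq_one_right h.symm

theorem prod_erase_Icc_natCast_sub {R : Type*} [CommRing R] {M j : ℕ} (hj : j ∈ Icc 1 M) :
    ∏ k ∈ (Icc 1 M).erase j, ((k : R) - j) = (-1) ^ (j - 1) * (j - 1)! * (M - j)! := by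
  obtain ⟨hj1, hjM⟩ := mem_Icc.1 hj
  have hsplit : (Icc 1 M).erase j = Ico 1 j ∪ Ico (j + 1) (M + 1) := by
    ext k; simp only [mem_erase, mem_Icc, mem_union, mem_Ico]; omega
  have hdisj : Disjoint (Ico 1 j) (Ico (j + 1) (M + 1)) :=
    disjoint_left.2 fun k hk hk' => by simp only [mem_Ico] at hk hk'; omega
  have hbelow : ∏ k ∈ Ico 1 j, ((k : R) - j) = (-1) ^ (j - 1) * (j - 1)! := by
    rw [prod_Ico_eq_prod_range, ← prod_range_add_one_eq_factorial, Nat.cast_prod,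
      ← prod_range_reflect (fun d => ((d + 1 : ℕ) : R)),
      show (-1 : R) ^ (j - 1) = ∏ _d ∈ range (j - 1), (-1 : R) by simp, ← prod_mul_distrib]
    refine prod_congr rfl fun d hd => ?_
    replace hd := mem_range.1 hd
    rw [show j - 1 - 1 - d + 1 = j - (1 + d) by omega, Nat.cast_sub (by omega)]
    ring
  have habove : ∏ k ∈ Ico (j + 1) (M + 1), ((k : R) - j) = (M - j)! := by
    rw [prod_Ico_eq_prod_range, ← prod_range_add_one_eq_factorial, Nat.cast_prod,
      show M + 1 - (j + 1) = M - j by omega]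
    refine prod_congr rfl fun d _ => ?_
    push_cast
    ring
  rw [hsplit, prod_union hdisj, hbelow, habove]

theorem nodalWeight_Icc_neg_natCast {F : Type*} [Field F] {M j : ℕ} (hj : j ∈ Icc 1 M) :
    Lagrange.nodalWeight (Icc 1 M) (fun k : ℕ => -(k : F)) j =
      (-1) ^ (j - 1) / ((j - 1)! * (M - j)! : F) := by
  simp only [Lagrange.nodalWeight, neg_sub_neg, prod_inv_distrib, prod_erase_Icc_natCast_sub hj,
    mul_assoc, mul_inv, ← inv_pow, inv_neg_one, div_eq_mul_inv]

theorem inv_prod_Icc_add_natCast {K : Type*} [Field K] [CharZero K] {M : ℕ} (hM : 1 ≤ M) {x : K}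
    (hx : ∀ j ∈ Icc 1 M, x + j ≠ 0) :
    (∏ j ∈ Icc 1 M, (x + j))⁻¹ =
      ∑ j ∈ Icc 1 M, (-1) ^ (j - 1) / ((j - 1)! * (M - j)! : K) * (x + j)⁻¹ := by
  have hinj : Set.InjOn (fun k : ℕ => -(k : K)) (Icc 1 M) :=
    (neg_injective.comp Nat.cast_injective).injOn
  have hnode : ∀ j ∈ Icc 1 M, x ≠ -(j : K) := fun j hj h => hx j hj (by rw [h, neg_add_cancel])
  simp_rw [← sub_neg_eq_add x, inv_prod_sub_eq_sum_nodalWeight hinj ⟨1, by simpa using hM⟩ hnode]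
  exact sum_congr rfl fun j hj => by rw [nodalWeight_Icc_neg_natCast hj]

theorem differentiable_Grec : Differentiable ℂ Grec := Complex.differentiable_one_div_Gamma

theorem Grec_eq_mul_Grec_add_one (s : ℂ) : Grec s = s * Grec (s + 1) :=
  Complex.one_div_Gamma_eq_self_mul_one_div_Gamma_add_one s

theorem Grec_one_add_eq_prod_mul (t : ℂ) (M : ℕ) :
    Grec (1 + t) = (∏ j ∈ Icc 1 M, (t + j)) * Grec (1 + t + M) := by
  induction M with
  | zero => simp
  | succ M ih =>
    rw [ih, prod_Icc_succ_top (by omega), Grec_eq_mul_Grec_add_one (1 + t + M)]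
    push_cast
    ring_nf

theorem norm_Grec_add_one_le {s : ℂ} (hs : 1 ≤ ‖s‖) : ‖Grec (s + 1)‖ ≤ ‖Grec s‖ := by
  rw [Grec_eq_mul_Grec_add_one s, norm_mul]
  exact le_mul_of_one_le_left (norm_nonneg _) hs

theorem exists_norm_Grec_add_nat_le {s : Set ℂ} (hs : Bornology.IsBounded s) :
    ∃ C, ∀ w ∈ s, ∀ m : ℕ, ‖Grec (w + m)‖ ≤ C := by
  obtain ⟨R, hR⟩ := hs.subset_closedBall 0
  set n₀ := ⌈R⌉₊ + 1
  obtain ⟨C, hC⟩ := (isCompact_closedBall (0 : ℂ) (R + n₀)).exists_bound_of_continuousOn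
    differentiable_Grec.continuous.continuousOn
  refine ⟨C, fun w hw m => ?_⟩
  have hwR : ‖w‖ ≤ R := by simpa using hR hw
  -- Up to `n₀` the points `w + m` stay in a compact ball; beyond it `‖w + m‖ ≥ 1`, so the
  -- recurrence can only decrease `‖Grec (w + m)‖`.
  induction m with
  | zero => exact hC _ (by simpa using hwR.trans (by simp))
  | succ k ih =>
    rcases le_or_gt (k + 1) n₀ with hk | hk
    · refine hC _ (mem_closedBall_zero_iff.2 ?_)
      calc ‖w + (k + 1 : ℕ)‖ ≤ ‖w‖ + ‖((k + 1 : ℕ) : ℂ)‖ := norm_add_le _ _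
        _ ≤ R + n₀ := by rw [Complex.norm_natCast]; gcongr
    · have hk' : (n₀ : ℝ) ≤ k := by exact_mod_cast Nat.lt_succ_iff.1 hk
      have hnorm : 1 ≤ ‖w + k‖ := by
        calc (1 : ℝ) ≤ w.re + k := by
              push_cast [n₀] at hk'
              linarith [Nat.le_ceil R, neg_abs_le w.re, Complex.abs_re_le_norm w]
          _ = (w + k).re := by simp
          _ ≤ ‖w + k‖ := Complex.re_le_norm _
      rw [Nat.cast_succ, ← add_assoc]
      exact (norm_Grec_add_one_le hnorm).trans ih

theorem deriv_Grec_eq_neg_digamma_mul {t : ℂ} (ht : ∀ n : ℕ, t ≠ -n) :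
    deriv Grec t = -digamma t * Grec t := by
  have hΓ := Complex.Gamma_ne_zero ht
  have h : HasDerivAt Grec _ t := (Complex.differentiableAt_Gamma t ht).hasDerivAt.inv hΓ
  rw [h.deriv, digamma, Grec]
  field_simp

theorem deriv_Grec_one_add_add_nat {ε : ℂ} (hε : ∀ j : ℕ, 1 ≤ j → ε + j ≠ 0) (M : ℕ) :
    deriv Grec (1 + ε + M) =
      -digamma (1 + ε) * Grec (1 + ε + M) +
        Grec (1 + ε) * ∑ j ∈ Icc 1 M, ((-1) ^ j / ((j - 1)! * (M - j)! : ℂ)) / (ε + j) ^ 2 := by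
  have hpole : ∀ n : ℕ, 1 + ε ≠ -n := fun n h =>
    hε (n + 1) (by omega) (by push_cast; linear_combination h)
  rcases Nat.eq_zero_or_pos M with rfl | hM
  · simp [deriv_Grec_eq_neg_digamma_mul hpole]
  set w : ℕ → ℂ := fun j => (-1) ^ (j - 1) / ((j - 1)! * (M - j)! : ℂ)
  have hnear : ∀ᶠ t : ℂ in 𝓝 ε, ∀ j ∈ Icc 1 M, t + j ≠ 0 :=
    (eventually_all_finset _).2 fun j hj =>
      (continuous_id.add continuous_const).continuousAt.eventually_ne (hε j (mem_Icc.1 hj).1)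
  have hlocal : (fun t => Grec (1 + t + M)) =ᶠ[𝓝 ε]
      fun t => Grec (1 + t) * ∑ j ∈ Icc 1 M, w j * (t + j)⁻¹ := by
    filter_upwards [hnear] with t ht
    rw [← inv_prod_Icc_add_natCast hM ht, Grec_one_add_eq_prod_mul t M, mul_right_comm,
      mul_inv_cancel₀ (prod_ne_zero_iff.2 ht), one_mul]
  have hshift : HasDerivAt (fun t => Grec (1 + t + M)) (deriv Grec (1 + ε + M)) ε := by
    simpa [Function.comp_def] using
      (differentiable_Grec _).hasDerivAt.comp ε (((hasDerivAt_id ε).const_add 1).add_const (M : ℂ))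
  have hpf : HasDerivAt (fun t : ℂ => ∑ j ∈ Icc 1 M, w j * (t + j)⁻¹)
      (∑ j ∈ Icc 1 M, w j * (-1 / (ε + j) ^ 2)) ε := by
    refine HasDerivAt.fun_sum fun j hj => ?_
    exact (((hasDerivAt_id ε).add_const (j : ℂ)).inv (hε j (mem_Icc.1 hj).1)).const_mul (w j)
  have hprod := ((differentiable_Grec _).hasDerivAt.comp_const_add 1 ε).fun_mul hpf
  rw [← hshift.deriv, hlocal.deriv_eq, hprod.deriv, deriv_Grec_eq_neg_digamma_mul hpole,
    hlocal.eq_of_nhds, mul_assoc]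
  congr 2
  refine sum_congr rfl fun j hj => ?_
  obtain ⟨i, rfl⟩ : ∃ i, j = i + 1 := ⟨j - 1, by have := (mem_Icc.1 hj).1; omega⟩
  simp only [w, Nat.add_sub_cancel, pow_succ]
  ring

noncomputable def besselSeries (a ν : ℂ) : ℂ := ∑' m : ℕ, a ^ m / m ! * Grec (ν + 1 + m)

theorem besselJ_eq_exp_mul_besselSeries (z : ℝ) (ν : ℂ) :
    besselJ z ν = Complex.exp (ν * Complex.log (z / 2)) * besselSeries (-(z : ℂ) ^ 2 / 4) ν := by
  simp only [besselJ, besselSeries, Grec, div_eq_mul_inv, mul_inv, mul_assoc]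

theorem hasDerivAt_besselSeries_term (a : ℂ) (m : ℕ) (ν : ℂ) :
    HasDerivAt (fun w => a ^ m / m ! * Grec (w + 1 + m))
      (a ^ m / m ! * deriv Grec (ν + 1 + m)) ν := by
  simpa only [add_assoc] using
    ((differentiable_Grec _).hasDerivAt.comp_add_const ν (1 + (m : ℂ))).const_mul (a ^ m / m !)

theorem exists_norm_besselSeries_term_le (a ν : ℂ) :
    ∃ C, ∀ m : ℕ, ∀ w ∈ Metric.ball ν 1,
      ‖a ^ m / m ! * Grec (w + 1 + m)‖ ≤ ‖a‖ ^ m / m ! * C := by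
  obtain ⟨C, hC⟩ := exists_norm_Grec_add_nat_le (Metric.isBounded_ball (x := ν + 1) (r := 1))
  refine ⟨C, fun m w hw => ?_⟩
  rw [norm_mul, norm_div, norm_pow, Complex.norm_natCast]
  gcongr
  exact hC (w + 1) (by simpa [Metric.mem_ball, dist_eq_norm] using hw) m

theorem summable_besselSeries (a ν : ℂ) :
    Summable fun m : ℕ => a ^ m / m ! * Grec (ν + 1 + m) := by
  obtain ⟨C, hC⟩ := exists_norm_besselSeries_term_le a ν
  exact .of_norm_bounded ((Real.summable_pow_div_factorial ‖a‖).mul_right C)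
    fun m => hC m ν (Metric.mem_ball_self one_pos)

theorem differentiable_besselSeries (a : ℂ) : Differentiable ℂ (besselSeries a) := fun ν => by
  obtain ⟨C, hC⟩ := exists_norm_besselSeries_term_le a ν
  refine (Complex.differentiableOn_tsum_of_summable_norm
    ((Real.summable_pow_div_factorial ‖a‖).mul_right C) (fun m w _ => ?_) Metric.isOpen_ball
    hC).differentiableAt (Metric.ball_mem_nhds ν one_pos)
  exact (hasDerivAt_besselSeries_term a m w).differentiableAt.differentiableWithinAt

theorem hasSum_deriv_besselSeries (a ν : ℂ) :
    HasSum (fun m : ℕ => a ^ m / m ! * deriv Grec (ν + 1 + m)) (deriv (besselSeries a) ν) := by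
  obtain ⟨C, hC⟩ := exists_norm_besselSeries_term_le a ν
  have h := Complex.hasSum_deriv_of_summable_norm
    ((Real.summable_pow_div_factorial ‖a‖).mul_right C)
    (fun m w _ => (hasDerivAt_besselSeries_term a m w).differentiableAt.differentiableWithinAt)
    Metric.isOpen_ball hC (Metric.mem_ball_self one_pos)
  simp only [(hasDerivAt_besselSeries_term a _ ν).deriv] at h
  exact h

theorem deriv_besselSeries_natCast_add (a : ℂ) (N : ℕ) {ε : ℂ}
    (hε : ∀ j : ℕ, 1 ≤ j → ε + j ≠ 0) :
    deriv (besselSeries a) (N + ε) =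
      -digamma (1 + ε) * besselSeries a (N + ε) +
        Grec (1 + ε) * ∑' m : ℕ, a ^ m / m ! *
          ∑ j ∈ Icc 1 (m + N), ((-1) ^ j / ((j - 1)! * (m + N - j)! : ℂ)) / (ε + j) ^ 2 := by
  have hterm (m : ℕ) : a ^ m / m ! * deriv Grec (N + ε + 1 + m) =
      -digamma (1 + ε) * (a ^ m / m ! * Grec (N + ε + 1 + m)) + Grec (1 + ε) * (a ^ m / m ! *
        ∑ j ∈ Icc 1 (m + N), ((-1) ^ j / ((j - 1)! * (m + N - j)! : ℂ)) / (ε + j) ^ 2) := by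
    rw [show (N + ε + 1 + m : ℂ) = 1 + ε + (m + N : ℕ) by push_cast; ring,
      deriv_Grec_one_add_add_nat hε]
    ring
  have h := (hasSum_deriv_besselSeries a (N + ε)).sub
    ((summable_besselSeries a (N + ε)).hasSum.mul_left (-digamma (1 + ε)))
  simp_rw [hterm, add_sub_cancel_left] at h
  rw [← tsum_mul_left, h.tsum_eq, besselSeries]
  ring

theorem deriv_besselJ_N_nonneg_general (z : ℝ) (N : ℕ) (ε : ℂ)
    (hε : ∀ j : ℕ, 1 ≤ j → ε + (j : ℂ) ≠ 0) :
    deriv (fun ν => besselJ z ν) ((N : ℂ) + ε) =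
      (Complex.log ((z : ℂ) / 2) - digamma (1 + ε)) * besselJ z ((N : ℂ) + ε) +
        Complex.exp (((N : ℂ) + ε) * Complex.log ((z : ℂ) / 2)) / Complex.Gamma (1 + ε) *
          ∑' m : ℕ, ((-(z : ℂ) ^ 2 / 4) ^ m / (m.factorial : ℂ) *
            ∑ j ∈ Finset.Icc 1 (m + N),
              ((-1) ^ j / (((j - 1).factorial : ℂ) * ((m + N - j).factorial : ℂ))) /
                (ε + (j : ℂ)) ^ 2) := by
  set L := Complex.log ((z : ℂ) / 2)
  have hexp : HasDerivAt (fun ν => Complex.exp (ν * L))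
      (Complex.exp ((N + ε) * L) * L) (N + ε) := by
    simpa using ((hasDerivAt_id _).mul_const L).cexp
  have hJ : (fun ν => besselJ z ν) =
      fun ν => Complex.exp (ν * L) * besselSeries (-(z : ℂ) ^ 2 / 4) ν :=
    funext (besselJ_eq_exp_mul_besselSeries z)
  rw [hJ, (hexp.fun_mul (differentiable_besselSeries _ _).hasDerivAt).deriv,
    deriv_besselSeries_natCast_add _ N hε, congrFun hJ, Grec, div_eq_mul_inv]
  ring

/-- First derivative, case `N ≥ 0`:
`∂/∂ν J_ν(z) = (log(z/2) − ψ(1+ε)) J_ν(z) + (z/2)^ν/Γ(1+ε) ·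
∑ₘ (−z²/4)ᵐ/m! ∑_{j=1}^{m+N} (−1)ʲ/((j−1)!(m+N−j)!) · 1/(ε+j)²`. -/
theorem deriv_besselJ_N_nonneg (z : ℝ) (hz : 0 < z) (N : ℕ) (ε : ℂ)
    (hε : ∀ j : ℕ, 1 ≤ j → ε + (j : ℂ) ≠ 0) :
    deriv (fun ν => besselJ z ν) ((N : ℂ) + ε) =
      (Complex.log ((z : ℂ) / 2) - digamma (1 + ε)) * besselJ z ((N : ℂ) + ε) +
        Complex.exp (((N : ℂ) + ε) * Complex.log ((z : ℂ) / 2)) / Complex.Gamma (1 + ε) *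
          ∑' m : ℕ, ((-(z : ℂ) ^ 2 / 4) ^ m / (m.factorial : ℂ) *
            ∑ j ∈ Finset.Icc 1 (m + N),
              ((-1) ^ j / (((j - 1).factorial : ℂ) * ((m + N - j).factorial : ℂ))) /
                (ε + (j : ℂ)) ^ 2) :=
  deriv_besselJ_N_nonneg_general z N ε hε
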